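/- Let A₁ be a finite nonempty set of vectors in ℝ^d, let θ* ∈ ℝ^d, let M ≥ 1 be a real number, and let x* ∈ A₁ satisfy ⟨θ*, x*⟩ = max_{x ∈ A₁} ⟨θ*, x⟩. Suppose (θ̂_p)_{p ≥ 1} is a sequence of vectors in ℝ^d and the sets A_{p+1} = {x ∈ A_p : max_{x' ∈ A_p} ⟨θ̂_p, x' − x⟩ ≤ 2^{−p+1}/√M} are defined recursively, and suppose that for every phase p ≥ 1 and every x ∈ A_p one has |⟨θ̂_p − θ*, x⟩| ≤ 2^{−p}/√M. Then for every p ≥ 1: (i) x* ∈ A_p, and (ii) every x ∈ A_p with p ≥ 2 satisfies ⟨θ*, x* − x⟩ ≤ 2^{−p+3}/√M. -/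
import Mathlib


open Matrix Finset

/-- **Properties under the good event.**
`A 1 = A₁` is the initial arm set, `x* ∈ A₁` maximizes `⟪θ*, ·⟫`, and for `p ≥ 1`
the sets `A (p+1) = {x ∈ A p : max_{x' ∈ A p} ⟪θ̂_p, x' − x⟫ ≤ 2^{−p+1}/√M}` are defined
recursively.  If in every phase `p ≥ 1` the estimate satisfies
`|⟪θ̂_p − θ*, x⟫| ≤ 2^{−p}/√M` for every active arm `x ∈ A p`, then for every `p ≥ 1`
the optimal arm `x*` is still in `A p`, and for `p ≥ 2` every `x ∈ A p` has gap
`⟪θ*, x* − x⟫ ≤ 2^{−p+3}/√M`. -/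
theorem good_event_properties (d : ℕ) (A1 : Finset (Fin d → ℝ)) (hA1 : A1.Nonempty)
    (θs : Fin d → ℝ) (M : ℝ) (hM : 1 ≤ M)
    (xstar : Fin d → ℝ) (hmem : xstar ∈ A1)
    (hopt : ∀ x ∈ A1, θs ⬝ᵥ x ≤ θs ⬝ᵥ xstar)
    (θhat : ℕ → (Fin d → ℝ))
    (A : ℕ → Finset (Fin d → ℝ))
    (hinit : A 1 = A1)
    (hrec : ∀ p, 1 ≤ p → A (p + 1) = (A p).filter
        (fun x => ∀ x' ∈ A p, θhat p ⬝ᵥ (x' - x) ≤ 2 ^ (-(p : ℤ) + 1) / Real.sqrt M))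
    (herr : ∀ p, 1 ≤ p → ∀ x ∈ A p, |(θhat p - θs) ⬝ᵥ x| ≤ 2 ^ (-(p : ℤ)) / Real.sqrt M) :
    ∀ p, 1 ≤ p → xstar ∈ A p ∧
      (2 ≤ p → ∀ x ∈ A p, θs ⬝ᵥ (xstar - x) ≤ 2 ^ (-(p : ℤ) + 3) / Real.sqrt M) := by
  have hMpos : (0:ℝ) < Real.sqrt M := Real.sqrt_pos.mpr (by linarith)
  -- A p ⊆ A1 for p ≥ 1
  have hsub : ∀ p, 1 ≤ p → A p ⊆ A1 := by
    intro p hp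
    induction p with
    | zero => omega
    | succ n ih =>
      rcases Nat.lt_or_ge n 1 with h | h
      · have : n = 0 := by omega
        subst this; rw [hinit]
      · rw [hrec n h]
        exact (Finset.filter_subset _ _).trans (ih h)
  -- x* is never eliminated
  have hmemA : ∀ p, 1 ≤ p → xstar ∈ A p := by
    intro p hp
    induction p with
    | zero => omega
    | succ n ih =>
      rcases Nat.lt_or_ge n 1 with h | h
      · have : n = 0 := by omega
        subst this; rw [hinit]; exact hmem
      · have hxn := ih h
        rw [hrec n h]
        refine Finset.mem_filter.mpr ⟨hxn, ?_⟩
        intro x' hx'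
        have h1 := (abs_le.mp (herr n h x' hx')).2
        have h2 := (abs_le.mp (herr n h xstar hxn)).1
        have h3 := hopt x' (hsub n h hx')
        have key : θhat n ⬝ᵥ (x' - xstar)
            = (θhat n - θs) ⬝ᵥ x' - (θhat n - θs) ⬝ᵥ xstar + (θs ⬝ᵥ x' - θs ⬝ᵥ xstar) := by
          simp [dotProduct_sub, sub_dotProduct]; ring
        have hpow : (2:ℝ) ^ (-(n:ℤ) + 1) / Real.sqrt M
            = 2 * (2 ^ (-(n:ℤ)) / Real.sqrt M) := by
          rw [zpow_add₀ (by norm_num : (2:ℝ) ≠ 0)]; ring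
        rw [key, hpow]
        linarith
  intro p hp
  refine ⟨hmemA p hp, ?_⟩
  intro hp2 x hx
  obtain ⟨n, rfl⟩ : ∃ n, p = n + 1 := ⟨p - 1, by omega⟩
  have h : 1 ≤ n := by omega
  rw [hrec n h] at hx
  obtain ⟨hxn, hcond⟩ := Finset.mem_filter.mp hx
  have hxsn := hmemA n h
  have hgap := hcond xstar hxsn
  have h1 := (abs_le.mp (herr n h xstar hxsn)).1
  have h2 := (abs_le.mp (herr n h x hxn)).2
  have key : θs ⬝ᵥ (xstar - x)
      = θhat n ⬝ᵥ (xstar - x) - (θhat n - θs) ⬝ᵥ xstar + (θhat n - θs) ⬝ᵥ x := by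
    simp [dotProduct_sub, sub_dotProduct]; try ring
  have hpow3 : (2:ℝ) ^ (-((n:ℤ)+1) + 3) / Real.sqrt M
      = 2 * (2 ^ (-(n:ℤ)) / Real.sqrt M) + 2 * (2 ^ (-(n:ℤ)) / Real.sqrt M) := by
    have : (-((n:ℤ)+1) + 3) = -(n:ℤ) + 2 := by ring
    rw [this, zpow_add₀ (by norm_num : (2:ℝ) ≠ 0)]; ring
  have hpow1 : (2:ℝ) ^ (-(n:ℤ) + 1) / Real.sqrt M
      = 2 * (2 ^ (-(n:ℤ)) / Real.sqrt M) := by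
    rw [zpow_add₀ (by norm_num : (2:ℝ) ≠ 0)]; ring
  rw [key]
  push_cast
  rw [hpow3]
  rw [hpow1] at hgap
  linarith
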